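/- Let r_2(n) be the number of binary rich words of length n. Then for all n ≥ 8, r_2(n) ≤ 252 · r_2(n−8), and consequently r_2(n)/2^n ≤ (63/64)^{⌊n/8⌋}, so the proportion of rich binary words decreases exponentially. -/

import Mathlib

open List

variable {A : Type*}

/-- All factors (contiguous subwords) of a word, as a list. -/
def Factors (w : List A) : List (List A) := w.tails.flatMap List.inits

/-- The set of distinct palindromic factors of `w` (including the empty word). -/
def palFactors [DecidableEq A] (w : List A) : Finset (List A) :=
  ((Factors w).filter (fun u => decide (u.reverse = u))).toFinset

/-- A word is rich if it has exactly `|w| + 1` distinct palindromic factors. -/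
def IsRich [DecidableEq A] (w : List A) : Prop :=
  (palFactors w).card = w.length + 1

/-- The defect of a finite word. -/
def defect [DecidableEq A] (w : List A) : ℕ :=
  w.length + 1 - (palFactors w).card

/-- `u` is a (finite) factor of the infinite word `z`. -/
def FactorOfInf (u : List A) (z : ℕ → A) : Prop :=
  ∃ i, u = (List.range u.length).map (fun k => z (i + k))

/-- An infinite word is rich if all of its finite factors are rich. -/
def InfRich [DecidableEq A] (z : ℕ → A) : Prop :=
  ∀ u : List A, FactorOfInf u z → IsRich u

/-- The longest palindromic suffix of `w`. -/
def lps [DecidableEq A] (w : List A) : List A :=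
  (w.tails.find? (fun u => decide (u.reverse = u))).getD []

/-- The number of occurrences of `u` as a factor of `w` (counted by position). -/
def occCount [DecidableEq A] (u w : List A) : ℕ :=
  w.tails.countP (fun t => decide (u <+: t))

/-- The periodic infinite word `u^∞`. -/
def periodicWord (u : List A) (hu : u ≠ []) : ℕ → A :=
  fun i => u.get ⟨i % u.length, Nat.mod_lt _ (List.length_pos_iff.mpr hu)⟩

/-- The number of binary rich words of length `n`. -/
noncomputable def r2 (n : ℕ) : ℕ :=
  Nat.card {f : Fin n → Fin 2 // IsRich (List.ofFn f)}

/-!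
Appending a letter to a word creates at most one new palindromic factor, its longest palindromic
suffix: a shorter palindromic suffix is a suffix, hence by symmetry a prefix, of that one, and so
already occurs earlier. Hence `|w| + 1` bounds the number of palindromic factors, and richness
(equality) passes to prefixes and, by reversal, to suffixes. Cutting a rich word into a prefix and
a suffix therefore makes the number of rich words submultiplicative in the length, and a finite
check gives `r2 8 = 252`.
-/

instance [DecidableEq A] : DecidablePred (IsRich (A := A)) := fun _ =>
  inferInstanceAs (Decidable (_ = _))

section Palindromes

variable [DecidableEq A]

lemma mem_palFactors {u w : List A} : u ∈ palFactors w ↔ u <:+: w ∧ u.reverse = u := by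
  simp only [palFactors, Factors, mem_toFinset, mem_filter, mem_flatMap, mem_tails, mem_inits,
    infix_iff_prefix_suffix, decide_eq_true_eq]
  tauto

lemma palFactors_nil : palFactors ([] : List A) = {[]} := by
  ext u
  simp only [mem_palFactors, Finset.mem_singleton]
  exact ⟨fun h => eq_nil_of_infix_nil h.1, by rintro rfl; exact ⟨infix_rfl, rfl⟩⟩

lemma palFactors_reverse (w : List A) : palFactors w.reverse = palFactors w := by
  ext u
  simp only [mem_palFactors]
  exact and_congr_left fun hu => by rw [← reverse_infix, hu, reverse_reverse]

omit [DecidableEq A] in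
lemma infix_of_append_eq_append_singleton {s u t w : List A} {a : A}
    (h : s ++ u ++ t = w ++ [a]) (ht : t ≠ []) : u <:+: w := by
  obtain ⟨t', b, rfl⟩ := (eq_nil_or_concat t).resolve_left ht
  rw [concat_eq_append, ← append_assoc] at h
  exact ⟨s, t', append_inj_left' h rfl⟩

lemma exists_palFactors_append_singleton_subset_insert (w : List A) (a : A) :
    ∃ P, palFactors (w ++ [a]) ⊆ insert P (palFactors w) := by
  obtain ⟨P, hP, hPmax⟩ := Finset.exists_max_image
    ((w ++ [a]).tails.toFinset.filter (fun u => u.reverse = u)) length ⟨[], by simp⟩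
  simp only [Finset.mem_filter, mem_toFinset, mem_tails] at hP hPmax
  obtain ⟨hPsuf, hPpal⟩ := hP
  refine ⟨P, fun u hu => ?_⟩
  obtain ⟨⟨s, t, hst⟩, hpal⟩ := mem_palFactors.mp hu
  rcases eq_or_ne t [] with rfl | ht
  · rw [append_nil] at hst
    have hu_suf : u <:+ w ++ [a] := ⟨s, hst⟩
    rcases eq_or_ne u P with rfl | hne
    · exact Finset.mem_insert_self _ _
    have hu_pre : u <+: P := by
      rw [← hpal, ← hPpal]
      exact reverse_prefix.mpr (suffix_of_suffix_length_le hu_suf hPsuf (hPmax u ⟨hu_suf, hpal⟩))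
    obtain ⟨t', rfl⟩ := hu_pre
    obtain ⟨s', hs'⟩ := hPsuf
    have ht' : t' ≠ [] := by rintro rfl; exact hne (append_nil u).symm
    exact Finset.mem_insert_of_mem (mem_palFactors.mpr
      ⟨infix_of_append_eq_append_singleton (by rw [← hs', append_assoc]) ht', hpal⟩)
  · exact Finset.mem_insert_of_mem
      (mem_palFactors.mpr ⟨infix_of_append_eq_append_singleton hst ht, hpal⟩)

lemma card_palFactors_append_le (w v : List A) :
    (palFactors (w ++ v)).card ≤ (palFactors w).card + v.length := by
  induction v using reverseRecOn with
  | nil => simp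
  | append_singleton v a ih =>
    obtain ⟨P, hP⟩ := exists_palFactors_append_singleton_subset_insert (w ++ v) a
    have := (Finset.card_le_card hP).trans (Finset.card_insert_le _ _)
    rw [← append_assoc, length_append, length_singleton]
    omega

lemma card_palFactors_le (w : List A) : (palFactors w).card ≤ w.length + 1 := by
  simpa [palFactors_nil, add_comm] using card_palFactors_append_le [] w

lemma IsRich.of_prefix {u w : List A} (h : IsRich w) (hp : u <+: w) : IsRich u := by
  obtain ⟨v, rfl⟩ := hp
  have := card_palFactors_append_le u v
  have := card_palFactors_le u
  unfold IsRich at h ⊢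
  rw [length_append] at h
  omega

lemma IsRich.reverse {w : List A} (h : IsRich w) : IsRich w.reverse := by
  rwa [IsRich, palFactors_reverse, length_reverse]

lemma IsRich.of_suffix {v w : List A} (h : IsRich w) (hs : v <:+ w) : IsRich v := by
  simpa using (h.reverse.of_prefix (reverse_prefix.mpr hs)).reverse

end Palindromes

lemma r2_add_le (m k : ℕ) : r2 (m + k) ≤ r2 m * r2 k := by
  rw [r2, r2, r2, ← Nat.card_prod]
  refine Nat.card_le_card_of_injective
    (fun f => (⟨fun i => f.1 (Fin.castAdd k i), ?_⟩, ⟨fun i => f.1 (Fin.natAdd m i), ?_⟩)) ?_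
  · exact f.2.of_prefix (by rw [List.ofFn_add]; exact prefix_append _ _)
  · exact f.2.of_suffix (by rw [List.ofFn_add]; exact suffix_append _ _)
  · intro f g hfg
    simp only [Prod.mk.injEq, Subtype.mk.injEq] at hfg
    exact Subtype.ext (funext fun i => Fin.addCases (congrFun hfg.1) (congrFun hfg.2) i)

lemma r2_le_two_pow (n : ℕ) : r2 n ≤ 2 ^ n := by
  simpa [r2] using Finite.card_subtype_le (fun f : Fin n → Fin 2 => IsRich (List.ofFn f))

lemma r2_mul_add_le (k q r : ℕ) : r2 (k * q + r) ≤ r2 k ^ q * r2 r := by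
  induction q with
  | zero => simp
  | succ q ih =>
    calc r2 (k * (q + 1) + r) = r2 (k + (k * q + r)) := by ring_nf
      _ ≤ r2 k * r2 (k * q + r) := r2_add_le _ _
      _ ≤ r2 k * (r2 k ^ q * r2 r) := Nat.mul_le_mul_left _ ih
      _ = r2 k ^ (q + 1) * r2 r := by ring

lemma r2_eight : r2 8 = 252 := by
  rw [r2, Nat.card_eq_fintype_card]
  decide +kernel

theorem count_binary_rich_words (n : ℕ) (hn : 8 ≤ n) :
    r2 n ≤ 252 * r2 (n - 8) ∧
    (r2 n : ℝ) / 2 ^ n ≤ (63 / 64 : ℝ) ^ (n / 8) := by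
  refine ⟨?_, ?_⟩
  · simpa [r2_eight, Nat.sub_add_cancel hn, mul_comm] using r2_add_le (n - 8) 8
  · have hn_split : n = 8 * (n / 8) + n % 8 := (Nat.div_add_mod n 8).symm
    have hcount : (r2 n : ℝ) ≤ 252 ^ (n / 8) * 2 ^ (n % 8) := by
      have := (r2_mul_add_le 8 (n / 8) (n % 8)).trans
        (Nat.mul_le_mul_left _ (r2_le_two_pow (n % 8)))
      rw [← hn_split, r2_eight] at this
      exact_mod_cast this
    calc (r2 n : ℝ) / 2 ^ n ≤ 252 ^ (n / 8) * 2 ^ (n % 8) / (256 ^ (n / 8) * 2 ^ (n % 8)) := by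
          rw [hn_split, pow_add, pow_mul, ← hn_split]
          gcongr
          norm_num
      _ = (63 / 64 : ℝ) ^ (n / 8) := by
          rw [mul_div_mul_right _ _ (by positivity), ← div_pow]
          norm_num
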